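/- arXiv:2605.06887 — 7 statements merged into one kernel-verified Lean document; each statement's English description precedes it below -/
import Mathlib

section
/- Let P be a nonnegative matrix on a finite set V with right eigenvector η > 0, P η = μ η, μ ∈ (0,1). Let λ, σ, ν be as in the subcritical village model (λ_x ≥ 0, ν_x ≥ 0, 0 ≤ σ_x ≤ λ_x/(1+λ_x)), and define β(m)_x = ν_x + Σ_y m_y P_{y,x} and φ(m)_x = (σ_x − λ_x/(1+λ_x))(1 − e^{−β(m)_x}) + β(m)_x. Then for all nonnegative m', m'' : V → ℝ, ‖φ(m') − φ(m'')‖_η ≤ μ ‖m' − m''‖_η, where ‖w‖_η = Σ_x |w_x| η_x. In other words, φ is a contraction with factor μ in the η-weighted ℓ¹ norm. -/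
/-- Key pointwise estimate in the ordered case `b ≤ a`. -/
lemma phi_aux (c a b : ℝ) (hc0 : -1 ≤ c) (hc1 : c ≤ 0) (hb : 0 ≤ b) (hab : b ≤ a) :
    |c * (Real.exp (-b) - Real.exp (-a)) + (a - b)| ≤ |a - b| := by
  have hE0 : 0 ≤ Real.exp (-b) - Real.exp (-a) := by
    have := Real.exp_le_exp.mpr (neg_le_neg hab)
    linarith
  have hmul : Real.exp (-b) * Real.exp (b - a) = Real.exp (-a) := by
    rw [← Real.exp_add]; ring_nf
  have h1 : b - a + 1 ≤ Real.exp (b - a) := Real.add_one_le_exp _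
  have h2 : Real.exp (-b) ≤ 1 := Real.exp_le_one_iff.mpr (by linarith)
  have h3 : 0 < Real.exp (-b) := Real.exp_pos _
  have hE1 : Real.exp (-b) - Real.exp (-a) ≤ a - b := by nlinarith
  have h4 : 0 ≤ (c + 1) * (Real.exp (-b) - Real.exp (-a)) :=
    mul_nonneg (by linarith) hE0
  have h5 : c * (Real.exp (-b) - Real.exp (-a)) ≤ 0 :=
    mul_nonpos_of_nonpos_of_nonneg hc1 hE0
  rw [abs_of_nonneg (by linarith), abs_of_nonneg (by linarith)]
  linarith

theorem phi_contraction {V : Type*} [Fintype V] (P : V → V → ℝ) (η : V → ℝ) (μ : ℝ)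
    (hP : ∀ x y, 0 ≤ P x y) (hη : ∀ x, 0 < η x) (hμ : 0 < μ ∧ μ < 1)
    (heig : ∀ x, ∑ y, P x y * η y = μ * η x)
    (lam σ ν : V → ℝ) (hlam : ∀ x, 0 ≤ lam x) (hν : ∀ x, 0 ≤ ν x)
    (hσ : ∀ x, 0 ≤ σ x ∧ σ x ≤ lam x / (1 + lam x))
    (β : (V → ℝ) → V → ℝ) (hβ : ∀ m x, β m x = ν x + ∑ y, m y * P y x)
    (φ : (V → ℝ) → V → ℝ)
    (hφ : ∀ m x, φ m x = (σ x - lam x / (1 + lam x)) * (1 - Real.exp (-(β m x))) + β m x)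
    (m' m'' : V → ℝ) (hm' : ∀ x, 0 ≤ m' x) (hm'' : ∀ x, 0 ≤ m'' x) :
    ∑ x, |φ m' x - φ m'' x| * η x ≤ μ * ∑ x, |m' x - m'' x| * η x := by
  have hβpos : ∀ (m : V → ℝ), (∀ y, 0 ≤ m y) → ∀ x, 0 ≤ β m x := by
    intro m hm x
    rw [hβ]
    have : 0 ≤ ∑ y, m y * P y x :=
      Finset.sum_nonneg fun y _ => mul_nonneg (hm y) (hP y x)
    linarith [hν x]
  -- pointwise bound
  have key : ∀ x, |φ m' x - φ m'' x| ≤ |β m' x - β m'' x| := by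
    intro x
    set c := σ x - lam x / (1 + lam x) with hc
    have hlx : (0:ℝ) < 1 + lam x := by linarith [hlam x]
    have hc1 : c ≤ 0 := by have := (hσ x).2; simp [hc]; linarith
    have hc0 : -1 ≤ c := by
      have h1 : lam x / (1 + lam x) ≤ 1 := by
        rw [div_le_one hlx]; linarith
      have := (hσ x).1
      simp [hc]; linarith
    have hb' := hβpos m' hm' x
    have hb'' := hβpos m'' hm'' x
    have hexpand : φ m' x - φ m'' x
        = c * (Real.exp (-(β m'' x)) - Real.exp (-(β m' x))) + (β m' x - β m'' x) := by
      rw [hφ, hφ]; ring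
    rcases le_total (β m'' x) (β m' x) with h | h
    · rw [hexpand]
      exact phi_aux c (β m' x) (β m'' x) hc0 hc1 hb'' h
    · rw [hexpand]
      have := phi_aux c (β m'' x) (β m' x) hc0 hc1 hb' h
      calc |c * (Real.exp (-(β m'' x)) - Real.exp (-(β m' x))) + (β m' x - β m'' x)|
          = |c * (Real.exp (-(β m' x)) - Real.exp (-(β m'' x))) + (β m'' x - β m' x)| := by
            rw [← abs_neg]; ring_nf
        _ ≤ |β m'' x - β m' x| := this
        _ = |β m' x - β m'' x| := abs_sub_comm _ _
  calc ∑ x, |φ m' x - φ m'' x| * η x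
      ≤ ∑ x, |β m' x - β m'' x| * η x := by
        apply Finset.sum_le_sum
        intro x _
        exact mul_le_mul_of_nonneg_right (key x) (hη x).le
    _ ≤ ∑ x, (∑ y, |m' y - m'' y| * P y x) * η x := by
        apply Finset.sum_le_sum
        intro x _
        apply mul_le_mul_of_nonneg_right _ (hη x).le
        rw [hβ, hβ]
        have : (ν x + ∑ y, m' y * P y x) - (ν x + ∑ y, m'' y * P y x)
            = ∑ y, (m' y - m'' y) * P y x := by
          simp only [sub_mul]; rw [Finset.sum_sub_distrib]; ring
        rw [this]
        calc |∑ y, (m' y - m'' y) * P y x| ≤ ∑ y, |(m' y - m'' y) * P y x| :=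
              Finset.abs_sum_le_sum_abs _ _
          _ = ∑ y, |m' y - m'' y| * P y x := by
              apply Finset.sum_congr rfl
              intro y _
              rw [abs_mul, abs_of_nonneg (hP y x)]
    _ = ∑ y, |m' y - m'' y| * ∑ x, P y x * η x := by
        simp only [Finset.sum_mul]
        rw [Finset.sum_comm]
        apply Finset.sum_congr rfl
        intro y _
        rw [Finset.mul_sum]
        apply Finset.sum_congr rfl
        intro x _
        ring
    _ = μ * ∑ x, |m' x - m'' x| * η x := by
        rw [Finset.mul_sum]
        apply Finset.sum_congr rfl
        intro y _
        rw [heig y]; ring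
end

section
/- Under the subcriticality assumption σ_x ≤ λ_x/(1+λ_x) for all x ∈ V (with σ_x ≥ 0, λ_x ≥ 0, ν_x ≥ 0, P nonnegative with Perron eigenvalue μ ∈ (0,1) and positive right eigenvector η), the map φ defined by φ(m)_x = (σ_x − λ_x/(1+λ_x))(1 − e^{−β(m)_x}) + β(m)_x, β(m)_x = ν_x + Σ_y m_y P_{y,x}, has a unique fixed point m_* in the nonnegative orthant of ℝ^V. -/
lemma aux_exp_diff {a b : ℝ} (hb : 0 ≤ b) (hab : b ≤ a) :
    Real.exp (-b) - Real.exp (-a) ≤ a - b := by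
  have h1 : Real.exp (-b) ≤ 1 := by
    rw [← Real.exp_zero]; exact Real.exp_le_exp.mpr (by linarith)
  have h2 : (b - a) + 1 ≤ Real.exp (b - a) := Real.add_one_le_exp _
  have h3 : Real.exp (-a) = Real.exp (-b) * Real.exp (b - a) := by
    rw [← Real.exp_add]; ring_nf
  have h4 : 0 < Real.exp (-b) := Real.exp_pos _
  nlinarith

lemma aux_g_mono_lip {c a b : ℝ} (hc1 : -1 ≤ c) (hc0 : c ≤ 0) (hb : 0 ≤ b) (hab : b ≤ a) :
    0 ≤ (c * (1 - Real.exp (-a)) + a) - (c * (1 - Real.exp (-b)) + b) ∧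
      (c * (1 - Real.exp (-a)) + a) - (c * (1 - Real.exp (-b)) + b) ≤ a - b := by
  have h1 := aux_exp_diff hb hab
  have h2 : Real.exp (-a) ≤ Real.exp (-b) := Real.exp_le_exp.mpr (by linarith)
  constructor <;>
    nlinarith [mul_nonneg (by linarith : (0:ℝ) ≤ c + 1)
        (by linarith : (0:ℝ) ≤ Real.exp (-b) - Real.exp (-a)),
      mul_nonpos_of_nonpos_of_nonneg hc0
        (by linarith : (0:ℝ) ≤ Real.exp (-b) - Real.exp (-a))]

lemma aux_g_lip {c a b : ℝ} (hc1 : -1 ≤ c) (hc0 : c ≤ 0) (ha : 0 ≤ a) (hb : 0 ≤ b) :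
    |(c * (1 - Real.exp (-a)) + a) - (c * (1 - Real.exp (-b)) + b)| ≤ |a - b| := by
  rcases le_total b a with h | h
  · obtain ⟨h1, h2⟩ := aux_g_mono_lip hc1 hc0 hb h
    rw [abs_of_nonneg h1, abs_of_nonneg (by linarith)]
    exact h2
  · obtain ⟨h1, h2⟩ := aux_g_mono_lip hc1 hc0 ha h
    rw [abs_sub_comm, abs_sub_comm a b, abs_of_nonneg h1, abs_of_nonneg (by linarith)]
    exact h2

lemma aux_g_nonneg {c b : ℝ} (hc1 : -1 ≤ c) (hb : 0 ≤ b) :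
    0 ≤ c * (1 - Real.exp (-b)) + b := by
  have h1 : Real.exp (-b) ≤ 1 := by
    rw [← Real.exp_zero]; exact Real.exp_le_exp.mpr (by linarith)
  have h2 : 1 - b ≤ Real.exp (-b) := by
    have := Real.add_one_le_exp (-b); linarith
  nlinarith [mul_nonneg (by linarith : (0:ℝ) ≤ c + 1)
      (by linarith : (0:ℝ) ≤ 1 - Real.exp (-b))]

theorem phi_unique_fixed_point {V : Type*} [Fintype V] [Nonempty V]
    (P : V → V → ℝ) (η : V → ℝ) (μ : ℝ)
    (hP : ∀ x y, 0 ≤ P x y) (hη : ∀ x, 0 < η x) (hμ : 0 < μ ∧ μ < 1)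
    (heig : ∀ x, ∑ y, P x y * η y = μ * η x)
    (lam σ ν : V → ℝ) (hlam : ∀ x, 0 ≤ lam x) (hν : ∀ x, 0 ≤ ν x)
    (hσ : ∀ x, 0 ≤ σ x ∧ σ x ≤ lam x / (1 + lam x))
    (β : (V → ℝ) → V → ℝ) (hβ : ∀ m x, β m x = ν x + ∑ y, m y * P y x)
    (φ : (V → ℝ) → V → ℝ)
    (hφ : ∀ m x, φ m x = (σ x - lam x / (1 + lam x)) * (1 - Real.exp (-(β m x))) + β m x) :
    ∃! m : V → ℝ, (∀ x, 0 ≤ m x) ∧ φ m = m := by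
  classical
  set c : V → ℝ := fun x => σ x - lam x / (1 + lam x) with hc_def
  have hc0 : ∀ x, c x ≤ 0 := fun x => sub_nonpos.2 (hσ x).2
  have hc1 : ∀ x, -1 ≤ c x := by
    intro x
    have hl := hlam x
    have hpos : (0:ℝ) < 1 + lam x := by linarith
    have h1 : lam x / (1 + lam x) ≤ 1 := by
      rw [div_le_one hpos]; linarith
    have h2 := (hσ x).1
    simp only [hc_def]; linarith
  -- the extended map ψ
  set B : (V → ℝ) → V → ℝ := fun m x => ν x + ∑ y, max (m y) 0 * P y x with hB_def
  set ψ : (V → ℝ) → V → ℝ := fun m x => c x * (1 - Real.exp (-(B m x))) + B m x with hψ_def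
  have hBnn : ∀ m x, 0 ≤ B m x := fun m x =>
    add_nonneg (hν x) (Finset.sum_nonneg fun y _ => mul_nonneg (le_max_right _ _) (hP y x))
  have hψnn : ∀ m x, 0 ≤ ψ m x := fun m x => aux_g_nonneg (hc1 x) (hBnn m x)
  have hψφ : ∀ m, (∀ x, 0 ≤ m x) → ψ m = φ m := by
    intro m hm
    funext x
    have hBβ : B m x = β m x := by
      rw [hβ]; simp only [hB_def]
      congr 1
      exact Finset.sum_congr rfl fun y _ => by rw [max_eq_left (hm y)]
    rw [hφ]
    simp only [hψ_def, hBβ, hc_def]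
  -- the weighted distance
  set D : (V → ℝ) → (V → ℝ) → ℝ := fun a b => ∑ x, η x * |a x - b x| with hD_def
  have hDnn : ∀ a b, 0 ≤ D a b := fun a b =>
    Finset.sum_nonneg fun x _ => mul_nonneg (hη x).le (abs_nonneg _)
  -- contraction estimate
  have hcontr : ∀ a b, D (ψ a) (ψ b) ≤ μ * D a b := by
    intro a b
    have step : ∀ x, η x * |ψ a x - ψ b x| ≤ η x * ∑ y, |a y - b y| * P y x := by
      intro x
      refine mul_le_mul_of_nonneg_left ?_ (hη x).le
      have lip : |ψ a x - ψ b x| ≤ |B a x - B b x| :=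
        aux_g_lip (hc1 x) (hc0 x) (hBnn a x) (hBnn b x)
      refine lip.trans ?_
      have hB : B a x - B b x = ∑ y, (max (a y) 0 - max (b y) 0) * P y x := by
        simp only [hB_def, sub_mul, Finset.sum_sub_distrib]
        ring
      rw [hB]
      refine (Finset.abs_sum_le_sum_abs _ _).trans ?_
      refine Finset.sum_le_sum fun y _ => ?_
      rw [abs_mul, abs_of_nonneg (hP y x)]
      exact mul_le_mul_of_nonneg_right (abs_max_sub_max_le_abs _ _ _) (hP y x)
    calc D (ψ a) (ψ b) ≤ ∑ x, η x * ∑ y, |a y - b y| * P y x :=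
          Finset.sum_le_sum fun x _ => step x
      _ = ∑ x, ∑ y, |a y - b y| * (P y x * η x) := by
          refine Finset.sum_congr rfl fun x _ => ?_
          rw [Finset.mul_sum]
          exact Finset.sum_congr rfl fun y _ => by ring
      _ = ∑ y, ∑ x, |a y - b y| * (P y x * η x) := Finset.sum_comm
      _ = ∑ y, |a y - b y| * (μ * η y) := by
          refine Finset.sum_congr rfl fun y _ => ?_
          rw [← Finset.mul_sum, heig y]
      _ = μ * D a b := by
          rw [hD_def, Finset.mul_sum]
          exact Finset.sum_congr rfl fun y _ => by ring
  -- minimum of η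
  obtain ⟨x0, -, hx0⟩ := Finset.exists_min_image Finset.univ η ⟨Classical.arbitrary V, Finset.mem_univ _⟩
  have hx0' : ∀ x, η x0 ≤ η x := fun x => hx0 x (Finset.mem_univ x)
  have hdistD : ∀ a b : V → ℝ, dist a b ≤ D a b / η x0 := by
    intro a b
    rw [dist_pi_le_iff (div_nonneg (hDnn a b) (hη x0).le)]
    intro x
    rw [Real.dist_eq, le_div_iff₀ (hη x0)]
    calc |a x - b x| * η x0 ≤ η x * |a x - b x| := by
          have := mul_le_mul_of_nonneg_left (hx0' x) (abs_nonneg (a x - b x))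
          linarith [this]
      _ ≤ D a b := Finset.single_le_sum
          (f := fun x => η x * |a x - b x|)
          (fun i _ => mul_nonneg (hη i).le (abs_nonneg _)) (Finset.mem_univ x)
  -- the iteration
  set u : ℕ → (V → ℝ) := fun n => ψ^[n] (fun _ => 0) with hu_def
  have hu_succ : ∀ n, u (n + 1) = ψ (u n) := fun n => Function.iterate_succ_apply' ψ n _
  have hDgeo : ∀ n, D (u n) (u (n + 1)) ≤ μ ^ n * D (u 0) (u 1) := by
    intro n
    induction n with
    | zero => simp
    | succ n ih =>
        have h1 : D (u (n+1)) (u (n+2)) ≤ μ * D (u n) (u (n+1)) := by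
          have hq := hcontr (u n) (u (n+1))
          rw [← hu_succ (n+1)] at hq
          rw [← hu_succ n] at hq
          exact hq
        calc D (u (n+1)) (u (n+2)) ≤ μ * D (u n) (u (n+1)) := h1
          _ ≤ μ * (μ ^ n * D (u 0) (u 1)) := by
              exact mul_le_mul_of_nonneg_left ih hμ.1.le
          _ = μ ^ (n+1) * D (u 0) (u 1) := by ring
  have hcauchy : CauchySeq u := by
    refine cauchySeq_of_le_geometric μ (D (u 0) (u 1) / η x0) hμ.2 fun n => ?_
    calc dist (u n) (u (n+1)) ≤ D (u n) (u (n+1)) / η x0 := hdistD _ _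
      _ ≤ μ ^ n * D (u 0) (u 1) / η x0 := (div_le_div_iff_of_pos_right (hη x0)).mpr (hDgeo n)
      _ = D (u 0) (u 1) / η x0 * μ ^ n := by ring
  obtain ⟨m, hm⟩ := cauchySeq_tendsto_of_complete hcauchy
  -- continuity of ψ
  have hψcont : Continuous ψ := by
    apply continuous_pi
    intro x
    have hs : Continuous fun m : V → ℝ => ∑ y, max (m y) 0 * P y x :=
      continuous_finset_sum _ fun y _ => ((continuous_apply y).max continuous_const).mul
        continuous_const
    have h1 : Continuous fun m : V → ℝ => B m x := continuous_const.add hs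
    exact (continuous_const.mul (continuous_const.sub (Real.continuous_exp.comp h1.neg))).add h1
  have hfix : ψ m = m := by
    have h2 : Filter.Tendsto (fun n => u (n + 1)) Filter.atTop (nhds m) :=
      hm.comp (Filter.tendsto_add_atTop_nat 1)
    have h3 : Filter.Tendsto (fun n => ψ (u n)) Filter.atTop (nhds (ψ m)) :=
      (hψcont.tendsto m).comp hm
    have h4 : (fun n => ψ (u n)) = fun n => u (n + 1) := funext fun n => (hu_succ n).symm
    rw [h4] at h3
    exact tendsto_nhds_unique h3 h2
  have hmnn : ∀ x, 0 ≤ m x := by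
    intro x
    rw [← hfix]
    exact hψnn m x
  have hmfix : φ m = m := by rw [← hψφ m hmnn]; exact hfix
  -- uniqueness
  refine ⟨m, ⟨hmnn, hmfix⟩, ?_⟩
  rintro m' ⟨hm'nn, hm'fix⟩
  have hψm' : ψ m' = m' := by rw [hψφ m' hm'nn]; exact hm'fix
  have hD : D m' m ≤ μ * D m' m := by
    conv_lhs => rw [← hψm', ← hfix]
    exact hcontr m' m
  have hD0 : D m' m = 0 := by
    have := hDnn m' m
    nlinarith [hμ.2]
  funext x
  have hterm : η x * |m' x - m x| = 0 := by
    have hnn : ∀ i ∈ Finset.univ, 0 ≤ η i * |m' i - m i| :=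
      fun i _ => mul_nonneg (hη i).le (abs_nonneg _)
    exact (Finset.sum_eq_zero_iff_of_nonneg hnn).mp hD0 x (Finset.mem_univ x)
  have : |m' x - m x| = 0 := by
    rcases mul_eq_zero.mp hterm with h | h
    · exact absurd h (hη x).ne'
    · exact h
  have := abs_eq_zero.mp this
  linarith
end

section
/- In the setting of the village model with σ_x ≤ λ_x/(1+λ_x), ν_x ≥ 0, P nonnegative with positive right eigenvector η and eigenvalue μ ∈ (0,1): for every nonnegative m : V → ℝ, ‖φ(m)‖_η ≤ ‖ν‖_η + μ·‖m‖_η, where β(m)_x = ν_x + Σ_y m_y P_{y,x}, φ(m)_x = (σ_x − λ_x/(1+λ_x))(1 − e^{−β(m)_x}) + β(m)_x, and ‖w‖_η = Σ_x |w_x| η_x. -/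
theorem phi_eta_norm_crude_bound {V : Type*} [Fintype V]
    (P : V → V → ℝ) (η : V → ℝ) (μ : ℝ)
    (hP : ∀ x y, 0 ≤ P x y) (hη : ∀ x, 0 < η x) (hμ : 0 < μ ∧ μ < 1)
    (heig : ∀ x, ∑ y, P x y * η y = μ * η x)
    (lam σ ν : V → ℝ) (hlam : ∀ x, 0 ≤ lam x) (hν : ∀ x, 0 ≤ ν x)
    (hσ : ∀ x, 0 ≤ σ x ∧ σ x ≤ lam x / (1 + lam x))
    (β : (V → ℝ) → V → ℝ) (hβ : ∀ m x, β m x = ν x + ∑ y, m y * P y x)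
    (φ : (V → ℝ) → V → ℝ)
    (hφ : ∀ m x, φ m x = (σ x - lam x / (1 + lam x)) * (1 - Real.exp (-(β m x))) + β m x)
    (m : V → ℝ) (hm : ∀ x, 0 ≤ m x) :
    ∑ x, |φ m x| * η x ≤ (∑ x, |ν x| * η x) + μ * ∑ x, |m x| * η x := by
  have hβ0 : ∀ x, 0 ≤ β m x := by
    intro x
    rw [hβ]
    have : 0 ≤ ∑ y, m y * P y x :=
      Finset.sum_nonneg fun y _ => mul_nonneg (hm y) (hP y x)
    linarith [hν x]
  have hcoef : ∀ x, -1 ≤ σ x - lam x / (1 + lam x) ∧ σ x - lam x / (1 + lam x) ≤ 0 := by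
    intro x
    have h1 : 0 < 1 + lam x := by linarith [hlam x]
    have h2 : lam x / (1 + lam x) ≤ 1 := by
      rw [div_le_one h1]; linarith
    constructor
    · linarith [(hσ x).1]
    · linarith [(hσ x).2]
  have hexp1 : ∀ x, Real.exp (-(β m x)) ≤ 1 := fun x =>
    Real.exp_le_one_iff.mpr (by linarith [hβ0 x])
  have hexp2 : ∀ x, 1 - Real.exp (-(β m x)) ≤ β m x := fun x => by
    have := Real.add_one_le_exp (-(β m x)); linarith
  have hφle : ∀ x, φ m x ≤ β m x := by
    intro x
    rw [hφ]
    have h1 : 0 ≤ 1 - Real.exp (-(β m x)) := by linarith [hexp1 x]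
    nlinarith [(hcoef x).2]
  have hφ0 : ∀ x, 0 ≤ φ m x := by
    intro x
    rw [hφ]
    have h1 : 0 ≤ 1 - Real.exp (-(β m x)) := by linarith [hexp1 x]
    nlinarith [(hcoef x).1, hexp2 x]
  have step1 : ∑ x, |φ m x| * η x ≤ ∑ x, β m x * η x := by
    apply Finset.sum_le_sum
    intro x _
    rw [abs_of_nonneg (hφ0 x)]
    exact mul_le_mul_of_nonneg_right (hφle x) (hη x).le
  have step2 : ∑ x, β m x * η x = (∑ x, |ν x| * η x) + μ * ∑ x, |m x| * η x := by
    have h1 : ∀ x, |ν x| = ν x := fun x => abs_of_nonneg (hν x)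
    have h2 : ∀ x, |m x| = m x := fun x => abs_of_nonneg (hm x)
    simp only [h1, h2]
    have : ∑ x, β m x * η x = (∑ x, ν x * η x) + ∑ x, (∑ y, m y * P y x) * η x := by
      rw [← Finset.sum_add_distrib]
      congr 1; ext x; rw [hβ]; ring
    rw [this]
    congr 1
    rw [Finset.mul_sum]
    rw [show ∑ x, (∑ y, m y * P y x) * η x = ∑ y, ∑ x, m y * P y x * η x by
      rw [Finset.sum_comm]; congr 1; ext x; rw [Finset.sum_mul]]
    congr 1; ext y
    have : ∑ x, m y * P y x * η x = m y * ∑ x, P y x * η x := by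
      rw [Finset.mul_sum]; congr 1; ext x; ring
    rw [this, heig]; ring
  linarith
end

section
/- If m : V → ℝ is nonnegative and satisfies φ(m) = m (with 0 ≤ σ_x ≤ λ_x/(1+λ_x), ν_x ≥ 0, P nonnegative), then the associated sleepy density s_x := −m_x + σ_x + β(m)_x satisfies 0 ≤ s_x ≤ λ_x/(1+λ_x) for all x ∈ V. -/
theorem sleepy_density_bounds {V : Type*} [Fintype V]
    (P : V → V → ℝ) (lam σ ν : V → ℝ)
    (hP : ∀ x y, 0 ≤ P x y) (hlam : ∀ x, 0 ≤ lam x) (hν : ∀ x, 0 ≤ ν x)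
    (hσ : ∀ x, 0 ≤ σ x ∧ σ x ≤ lam x / (1 + lam x))
    (β : (V → ℝ) → V → ℝ) (hβ : ∀ m x, β m x = ν x + ∑ y, m y * P y x)
    (φ : (V → ℝ) → V → ℝ)
    (hφ : ∀ m x, φ m x = (σ x - lam x / (1 + lam x)) * (1 - Real.exp (-(β m x))) + β m x)
    (m : V → ℝ) (hm : ∀ x, 0 ≤ m x) (hfix : φ m = m) (x : V) :
    0 ≤ -m x + σ x + β m x ∧ -m x + σ x + β m x ≤ lam x / (1 + lam x) := by
  have hb : 0 ≤ β m x := by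
    rw [hβ]
    have : 0 ≤ ∑ y, m y * P y x :=
      Finset.sum_nonneg fun y _ => mul_nonneg (hm y) (hP y x)
    linarith [hν x]
  have hmx : m x = (σ x - lam x / (1 + lam x)) * (1 - Real.exp (-(β m x))) + β m x := by
    conv_lhs => rw [← hfix]
    exact hφ m x
  have he1 : Real.exp (-(β m x)) ≤ 1 := Real.exp_le_one_iff.mpr (by linarith)
  have he0 : 0 < Real.exp (-(β m x)) := Real.exp_pos _
  obtain ⟨h1, h2⟩ := hσ x
  constructor
  · nlinarith
  · nlinarith
end

section
/- Fix n ≥ 1, u ∈ ℕ, q₀ ∈ {0,…,n}, p ∈ [0,1]. Let γ_1,…,γ_u be i.i.d. uniform on [n], S ⊆ [n] with |S| = q₀, Q = #{i ∈ S : no γ_j equals i}, A = #{i ∈ [n] : some γ_j equals i}, and let κ̃_1,…,κ̃_n be i.i.d. Bernoulli(p) independent of the γ's, with J = Σ_{i : some γ_j = i} κ̃_i. Then E[q₀ − Q + u − A + J] = n·(q₀/n − (1−p))·(1 − (1−1/n)^u) + u. -/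
/-!
Linearity of expectation reduces everything to one site `i` at a time. The walkers miss `i`
independently, each with probability `1 - 1/n`, so `i` is hit with probability
`1 - (1 - 1/n)^u`; the coin at `i` is independent of the walkers, so `i` is hit with its coin
showing `true` with probability `p (1 - (1 - 1/n)^u)`. Summing over the sites gives
`E[q₀ - Q] = q₀ (1 - c)`, `E[A] = n (1 - c)` and `E[J] = n p (1 - c)` with `c = (1 - 1/n)^u`.
-/

open MeasureTheory ProbabilityTheory Finset

universe v

section Independence

variable {Ω ι ι' : Type*} {α β : Type v} [MeasurableSpace Ω] {μ : Measure Ω}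
  [MeasurableSpace α] [MeasurableSpace β]

/-- `γ` and `κ` are mutually independent, as a single family indexed by `ι ⊕ ι'`. -/
def iIndepFunSum (γ : ι → Ω → α) (κ : ι' → Ω → β) (μ : Measure Ω) : Prop :=
  iIndepFun (β := fun k : ι ⊕ ι' => Sum.elim (fun _ => α) (fun _ => β) k)
    (m := fun k => Sum.rec
      (motive := fun k => MeasurableSpace (Sum.elim (fun _ => α) (fun _ => β) k))
      (fun _ => (inferInstance : MeasurableSpace α))
      (fun _ => (inferInstance : MeasurableSpace β)) k)
    (fun k => Sum.rec
      (motive := fun k => Ω → Sum.elim (fun _ => α) (fun _ => β) k)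
      (fun j => γ j) (fun i => κ i) k) μ

variable [Fintype ι] {γ : ι → Ω → α} {κ : ι' → Ω → β}

lemma iIndepFunSum.measureReal_forall_mem_inter_preimage (h : iIndepFunSum γ κ μ)
    {s : Set α} (hs : MeasurableSet s) (i : ι') {t : Set β} (ht : MeasurableSet t) :
    μ.real ({ω | ∀ j, γ j ω ∈ s} ∩ κ i ⁻¹' t) =
      (∏ j, μ.real (γ j ⁻¹' s)) * μ.real (κ i ⁻¹' t) := by
  have hprod := h.measure_inter_preimage_eq_mul (cons (Sum.inr i) (univ.map .inl) (by simp))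
    (sets := Sum.rec (fun _ => s) (fun _ => t))
    (by rintro (j | i') - <;> assumption)
  rw [prod_cons, prod_map] at hprod
  simp only [measureReal_def, ← ENNReal.toReal_prod, ← ENNReal.toReal_mul, mul_comm _ (μ _)]
  congr 1
  convert hprod using 2
  · ext ω; simp [and_comm]
  · rfl
  · rfl

end Independence

section Sites

variable {Ω ι : Type*} {α β : Type v} [MeasurableSpace Ω] {μ : Measure Ω}
  [IsProbabilityMeasure μ] [MeasurableSpace α] [MeasurableSingletonClass α] [MeasurableSpace β]
  [Fintype ι] {γ : ι → Ω → α} {κ : α → Ω → β} {a : α} {r : ℝ}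

lemma iIndepFunSum.measureReal_forall_ne_inter_preimage (h : iIndepFunSum γ κ μ)
    (hγ : ∀ j, Measurable (γ j)) (hr : ∀ j, μ.real {ω | γ j ω = a} = r)
    {t : Set β} (ht : MeasurableSet t) :
    μ.real ({ω | ∀ j, γ j ω ≠ a} ∩ κ a ⁻¹' t) =
      (1 - r) ^ Fintype.card ι * μ.real (κ a ⁻¹' t) := by
  have hmiss : ∀ j, μ.real (γ j ⁻¹' {a})ᶜ = 1 - r := fun j => by
    rw [probReal_compl_eq_one_sub (hγ j (measurableSet_singleton a))]
    exact congrArg (1 - ·) (hr j)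
  simpa [hmiss] using
    h.measureReal_forall_mem_inter_preimage (measurableSet_singleton a).compl a ht

lemma iIndepFunSum.measureReal_forall_ne (h : iIndepFunSum γ κ μ)
    (hγ : ∀ j, Measurable (γ j)) (hr : ∀ j, μ.real {ω | γ j ω = a} = r) :
    μ.real {ω | ∀ j, γ j ω ≠ a} = (1 - r) ^ Fintype.card ι := by
  simpa only [Set.preimage_univ, Set.inter_univ, probReal_univ, mul_one]
    using h.measureReal_forall_ne_inter_preimage hγ hr MeasurableSet.univ

lemma iIndepFunSum.measureReal_exists_eq (h : iIndepFunSum γ κ μ)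
    (hγ : ∀ j, Measurable (γ j)) (hr : ∀ j, μ.real {ω | γ j ω = a} = r) :
    μ.real {ω | ∃ j, γ j ω = a} = 1 - (1 - r) ^ Fintype.card ι := by
  rw [← h.measureReal_forall_ne hγ hr, ← probReal_compl_eq_one_sub (by measurability)]
  congr 1
  ext
  simp

lemma iIndepFunSum.measureReal_exists_eq_inter_preimage (h : iIndepFunSum γ κ μ)
    (hγ : ∀ j, Measurable (γ j)) (hr : ∀ j, μ.real {ω | γ j ω = a} = r)
    {t : Set β} (ht : MeasurableSet t) :
    μ.real ({ω | ∃ j, γ j ω = a} ∩ κ a ⁻¹' t) =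
      (1 - (1 - r) ^ Fintype.card ι) * μ.real (κ a ⁻¹' t) := by
  have hsplit := measureReal_inter_add_sdiff (μ := μ) (s := κ a ⁻¹' t)
    (t := {ω | ∀ j, γ j ω ≠ a}) (by measurability)
  have hhit : κ a ⁻¹' t \ {ω | ∀ j, γ j ω ≠ a} = {ω | ∃ j, γ j ω = a} ∩ κ a ⁻¹' t := by
    ext; simp [and_comm]
  rw [Set.inter_comm, h.measureReal_forall_ne_inter_preimage hγ hr ht, hhit] at hsplit
  linarith

end Sites

section Counting

variable {Ω ι : Type*} {P : ι → Ω → Prop} [∀ ω, DecidablePred (P · ω)]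

lemma card_filter_eq_sum_indicator (s : Finset ι) (ω : Ω) :
    (#(s.filter (P · ω)) : ℝ) = ∑ i ∈ s, {ω | P i ω}.indicator 1 ω := by
  rw [card_filter]
  push_cast
  simp [Set.indicator_apply]

variable [MeasurableSpace Ω] {μ : Measure Ω} [IsFiniteMeasure μ]

lemma integrable_card_filter (s : Finset ι) (hP : ∀ i, MeasurableSet {ω | P i ω}) :
    Integrable (fun ω => (#(s.filter (P · ω)) : ℝ)) μ := by
  simp_rw [card_filter_eq_sum_indicator]
  exact integrable_finsetSum _ fun i _ => (integrable_const 1).indicator (hP i)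

lemma integral_card_filter (s : Finset ι) (hP : ∀ i, MeasurableSet {ω | P i ω}) :
    ∫ ω, (#(s.filter (P · ω)) : ℝ) ∂μ = ∑ i ∈ s, μ.real {ω | P i ω} := by
  simp_rw [card_filter_eq_sum_indicator]
  rw [integral_finsetSum _ fun i _ => (integrable_const 1).indicator (hP i)]
  exact sum_congr rfl fun i _ => integral_indicator_one (hP i)

end Counting

theorem expected_single_loop_outflux_general {Ω : Type*} [MeasurableSpace Ω]
    (μ : Measure Ω) [IsProbabilityMeasure μ]
    (n u : ℕ) (hn : 1 ≤ n) (q₀ : ℕ) (p : ℝ) (hp : 0 ≤ p ∧ p ≤ 1)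
    (γ : Fin u → Ω → Fin n) (κ : Fin n → Ω → Bool)
    (hγmeas : ∀ j, Measurable (γ j)) (hκmeas : ∀ i, Measurable (κ i))
    (hindep : iIndepFun (β := fun k : Fin u ⊕ Fin n => Sum.elim (fun _ => Fin n) (fun _ => Bool) k)
      (m := fun k => Sum.rec
        (motive := fun k => MeasurableSpace (Sum.elim (fun _ => Fin n) (fun _ => Bool) k))
        (fun _ => (inferInstance : MeasurableSpace (Fin n)))
        (fun _ => (inferInstance : MeasurableSpace Bool)) k)
      (fun k => Sum.rec
        (motive := fun k => Ω → Sum.elim (fun _ => Fin n) (fun _ => Bool) k)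
        (fun j => γ j) (fun i => κ i) k) μ)
    (hunif : ∀ j i, μ {ω | γ j ω = i} = (n : ENNReal)⁻¹)
    (hbern : ∀ i, μ {ω | κ i ω = true} = ENNReal.ofReal p)
    (S : Finset (Fin n)) (hS : S.card = q₀)
    (Q : Ω → ℕ) (hQ : ∀ ω, Q ω = (S.filter fun i => ∀ j, γ j ω ≠ i).card)
    (A : Ω → ℕ) (hA : ∀ ω, A ω = (univ.filter fun i : Fin n => ∃ j, γ j ω = i).card)
    (J : Ω → ℕ)
    (hJ : ∀ ω, J ω =
      ∑ i ∈ univ.filter (fun i : Fin n => ∃ j, γ j ω = i), (if κ i ω then 1 else 0)) :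
    ∫ ω, ((q₀ : ℝ) - Q ω + u - A ω + J ω) ∂μ
      = n * ((q₀ : ℝ) / n - (1 - p)) * (1 - (1 - 1 / n) ^ u) + u := by
  have hindep' : iIndepFunSum γ κ μ := hindep
  have hγ : ∀ i j, μ.real {ω | γ j ω = i} = 1 / n := fun i j => by simp [measureReal_def, hunif]
  have hκ : ∀ i, μ.real (κ i ⁻¹' {true}) = p := fun i => by
    change (μ {ω | κ i ω = true}).toReal = p
    rw [hbern, ENNReal.toReal_ofReal hp.1]
  have hJ' : ∀ ω, J ω = #(univ.filter fun i => (∃ j, γ j ω = i) ∧ κ i ω = true) := fun ω => by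
    rw [hJ, sum_boole, filter_filter, Nat.cast_id]
  have hQi := integrable_card_filter (μ := μ) S (P := fun i ω => ∀ j, γ j ω ≠ i)
    (by measurability)
  have hAi := integrable_card_filter (μ := μ) univ (P := fun i ω => ∃ j, γ j ω = i)
    (by measurability)
  have hJi := integrable_card_filter (μ := μ) univ
    (P := fun i ω => (∃ j, γ j ω = i) ∧ κ i ω = true) (by measurability)
  have hhit_true : ∀ i, μ.real {ω | (∃ j, γ j ω = i) ∧ κ i ω = true} =
      (1 - (1 - 1 / n) ^ u) * p := fun i => by
    have := hindep'.measureReal_exists_eq_inter_preimage hγmeas (hγ i) (measurableSet_singleton true)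
    rwa [Fintype.card_fin, hκ] at this
  simp only [hQ, hA, hJ']
  rw [integral_add (by fun_prop) hJi, integral_sub (by fun_prop) hAi,
    integral_add (by fun_prop) (by fun_prop), integral_sub (by fun_prop) hQi, integral_const,
    integral_const, integral_card_filter _ (by measurability),
    integral_card_filter _ (by measurability), integral_card_filter _ (by measurability)]
  simp only [fun i => hindep'.measureReal_forall_ne hγmeas (hγ i),
    fun i => hindep'.measureReal_exists_eq hγmeas (hγ i), hhit_true, Fintype.card_fin,
    sum_const, hS, card_univ, probReal_univ, smul_eq_mul, nsmul_eq_mul, one_mul]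
  have hn0 : (n : ℝ) ≠ 0 := Nat.cast_ne_zero.2 (by omega)
  field_simp
  ring

theorem expected_single_loop_outflux {Ω : Type*} [MeasurableSpace Ω]
    (μ : Measure Ω) [IsProbabilityMeasure μ]
    (n u : ℕ) (hn : 1 ≤ n) (q₀ : ℕ) (hq₀ : q₀ ≤ n) (p : ℝ) (hp : 0 ≤ p ∧ p ≤ 1)
    (γ : Fin u → Ω → Fin n) (κ : Fin n → Ω → Bool)
    (hγmeas : ∀ j, Measurable (γ j)) (hκmeas : ∀ i, Measurable (κ i))
    (hindep : iIndepFun (β := fun k : Fin u ⊕ Fin n => Sum.elim (fun _ => Fin n) (fun _ => Bool) k)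
      (m := fun k => Sum.rec
        (motive := fun k => MeasurableSpace (Sum.elim (fun _ => Fin n) (fun _ => Bool) k))
        (fun _ => (inferInstance : MeasurableSpace (Fin n)))
        (fun _ => (inferInstance : MeasurableSpace Bool)) k)
      (fun k => Sum.rec
        (motive := fun k => Ω → Sum.elim (fun _ => Fin n) (fun _ => Bool) k)
        (fun j => γ j) (fun i => κ i) k) μ)
    (hunif : ∀ j i, μ {ω | γ j ω = i} = (n : ENNReal)⁻¹)
    (hbern : ∀ i, μ {ω | κ i ω = true} = ENNReal.ofReal p)
    (S : Finset (Fin n)) (hS : S.card = q₀)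
    (Q : Ω → ℕ) (hQ : ∀ ω, Q ω = (S.filter fun i => ∀ j, γ j ω ≠ i).card)
    (A : Ω → ℕ) (hA : ∀ ω, A ω = (univ.filter fun i : Fin n => ∃ j, γ j ω = i).card)
    (J : Ω → ℕ)
    (hJ : ∀ ω, J ω =
      ∑ i ∈ univ.filter (fun i : Fin n => ∃ j, γ j ω = i), (if κ i ω then 1 else 0)) :
    ∫ ω, ((q₀ : ℝ) - Q ω + u - A ω + J ω) ∂μ
      = n * ((q₀ : ℝ) / n - (1 - p)) * (1 - (1 - 1 / n) ^ u) + u :=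
  expected_single_loop_outflux_general μ n u hn q₀ p hp γ κ hγmeas hκmeas hindep hunif hbern S hS Q
    hQ A hA J hJ
end

section
/- Suppose η : V → ℝ satisfies 0 < η_x ≤ 1 with η_min = min_x η_x, μ ∈ (0,1), α = (1−μ)/2, and C_* = ‖ν‖_η/(α·η_min) for a nonnegative ν : V → ℝ. If a nonnegative vector m : V → ℝ satisfies ‖m‖_1 > C_* and a vector w : V → ℝ satisfies both ‖w − φ(m)‖_η ≤ α‖m‖_η and ‖φ(m)‖_η ≤ ‖ν‖_η + μ‖m‖_η, then ‖w‖_η < ‖m‖_η; in particular w ≠ m. -/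
open Finset

theorem strict_decrease_above_Cstar {V : Type*} [Fintype V] [Nonempty V]
    (η : V → ℝ) (hη : ∀ x, 0 < η x ∧ η x ≤ 1)
    (μ : ℝ) (hμ : 0 < μ ∧ μ < 1)
    (ν : V → ℝ) (hν : ∀ x, 0 ≤ ν x)
    (α : ℝ) (hα : α = (1 - μ) / 2)
    (Cstar : ℝ)
    (hC : Cstar = (∑ x, |ν x| * η x) / (α * univ.inf' univ_nonempty η))
    (m : V → ℝ) (hm : ∀ x, 0 ≤ m x) (hm1 : Cstar < ∑ x, |m x|)
    (φm w : V → ℝ)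
    (hw : ∑ x, |w x - φm x| * η x ≤ α * ∑ x, |m x| * η x)
    (hφm : ∑ x, |φm x| * η x ≤ (∑ x, |ν x| * η x) + μ * ∑ x, |m x| * η x) :
    (∑ x, |w x| * η x) < ∑ x, |m x| * η x ∧ w ≠ m := by
  set ηmin := univ.inf' univ_nonempty η with hηmin
  have hηminpos : 0 < ηmin := by
    rw [hηmin, Finset.lt_inf'_iff]
    exact fun i _ => (hη i).1
  have hαpos : 0 < α := by rw [hα]; linarith [hμ.2]
  -- ‖ν‖_η < α * ‖m‖_η
  have hmono : ηmin * ∑ x, |m x| ≤ ∑ x, |m x| * η x := by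
    rw [Finset.mul_sum]
    refine Finset.sum_le_sum fun i _ => ?_
    rw [mul_comm]
    exact mul_le_mul_of_nonneg_left (Finset.inf'_le η (mem_univ i)) (abs_nonneg _)
  have hN : (∑ x, |ν x| * η x) < α * ∑ x, |m x| * η x := by
    have h1 : (∑ x, |ν x| * η x) = Cstar * (α * ηmin) := by
      rw [hC, div_mul_cancel₀]
      positivity
    calc (∑ x, |ν x| * η x) = Cstar * (α * ηmin) := h1
      _ < (∑ x, |m x|) * (α * ηmin) := by
          apply mul_lt_mul_of_pos_right hm1; positivity
      _ = α * (ηmin * ∑ x, |m x|) := by ring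
      _ ≤ α * ∑ x, |m x| * η x := by
          exact mul_le_mul_of_nonneg_left hmono hαpos.le
  have htri : (∑ x, |w x| * η x) ≤ (∑ x, |w x - φm x| * η x) + ∑ x, |φm x| * η x := by
    rw [← Finset.sum_add_distrib]
    refine Finset.sum_le_sum fun i _ => ?_
    rw [← add_mul]
    exact mul_le_mul_of_nonneg_right (by
      calc |w i| = |(w i - φm i) + φm i| := by ring_nf
        _ ≤ |w i - φm i| + |φm i| := abs_add_le _ _) (hη i).1.le
  have hlt : (∑ x, |w x| * η x) < ∑ x, |m x| * η x := by
    have : α * (∑ x, |m x| * η x) + ((∑ x, |ν x| * η x) + μ * ∑ x, |m x| * η x)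
        < ∑ x, |m x| * η x := by
      have h2 : 2 * α + μ = 1 := by rw [hα]; ring
      have h3 : (2 * α + μ) * (∑ x, |m x| * η x) = 1 * (∑ x, |m x| * η x) := by rw [h2]
      nlinarith [hN, h3]
    linarith [htri, hw, hφm]
  refine ⟨hlt, fun h => ?_⟩
  subst h
  exact lt_irrefl _ hlt
end

section
/- Let m_*(σ, ν) denote the unique nonnegative fixed point of φ_{σ,ν} (the map φ with initial sleepy density σ and active density ν) and let s_*(σ, ν)_x := −m_*(σ,ν)_x + σ_x + ν_x + Σ_y m_*(σ,ν)_y P_{y,x}. Then, for all admissible σ (0 ≤ σ_x ≤ λ_x/(1+λ_x)) and nonnegative ν, ν': s_*(s_*(σ,ν), ν') = s_*(σ, ν + ν') and m_*(σ,ν) + m_*(s_*(σ,ν), ν') = m_*(σ, ν+ν') (continuum abelian property). -/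
/-- One-sided Lipschitz estimate for `b ↦ s*(1 - exp(-b)) + b` with `-1 ≤ s ≤ 0`. -/
lemma lip_aux (s b b' : ℝ) (hs0 : s ≤ 0) (hs1 : -1 ≤ s) (hb' : 0 ≤ b') (h : b' ≤ b) :
    |(s * (1 - Real.exp (-b)) + b) - (s * (1 - Real.exp (-b')) + b')| ≤ b - b' := by
  have h1 : Real.exp (-b) ≤ Real.exp (-b') := Real.exp_le_exp.mpr (by linarith)
  have h2 : Real.exp (-b') ≤ 1 := Real.exp_le_one_iff.mpr (by linarith)
  have h3 : 1 + (b' - b) ≤ Real.exp (b' - b) := by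
    linarith [Real.add_one_le_exp (b' - b)]
  have h4 : Real.exp (-b') * Real.exp (b' - b) = Real.exp (-b) := by
    rw [← Real.exp_add]; ring_nf
  have h5 : Real.exp (-b') - Real.exp (-b) ≤ b - b' := by
    nlinarith [Real.exp_pos (-b')]
  rw [abs_le]
  constructor <;> nlinarith

lemma lip (s b b' : ℝ) (hs0 : s ≤ 0) (hs1 : -1 ≤ s) (hb : 0 ≤ b) (hb' : 0 ≤ b') :
    |(s * (1 - Real.exp (-b)) + b) - (s * (1 - Real.exp (-b')) + b')| ≤ |b - b'| := by
  rcases le_total b' b with h | h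
  · exact le_trans (lip_aux s b b' hs0 hs1 hb' h) (le_abs_self _)
  · rw [abs_sub_comm]
    refine le_trans (lip_aux s b' b hs0 hs1 hb h) ?_
    rw [abs_sub_comm]
    exact le_abs_self _

theorem continuum_abelian_property {V : Type*} [Fintype V]
    (P : V → V → ℝ) (η : V → ℝ) (μ : ℝ)
    (hP : ∀ x y, 0 ≤ P x y) (hη : ∀ x, 0 < η x) (hμ : 0 < μ ∧ μ < 1)
    (heig : ∀ x, ∑ y, P x y * η y = μ * η x)
    (lam : V → ℝ) (hlam : ∀ x, 0 ≤ lam x)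
    (σ : V → ℝ) (hσ : ∀ x, 0 ≤ σ x ∧ σ x ≤ lam x / (1 + lam x))
    (ν ν' : V → ℝ) (hν : ∀ x, 0 ≤ ν x) (hν' : ∀ x, 0 ≤ ν' x)
    (β : (V → ℝ) → (V → ℝ) → V → ℝ)
    (hβ : ∀ ν₀ m x, β ν₀ m x = ν₀ x + ∑ y, m y * P y x)
    (φ : (V → ℝ) → (V → ℝ) → (V → ℝ) → V → ℝ)
    (hφ : ∀ σ₀ ν₀ m x, φ σ₀ ν₀ m x =
      (σ₀ x - lam x / (1 + lam x)) * (1 - Real.exp (-(β ν₀ m x))) + β ν₀ m x)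
    -- m₁ = m_*(σ, ν), the unique nonnegative fixed point of φ σ ν
    (m₁ : V → ℝ) (hm₁ : ∀ x, 0 ≤ m₁ x) (hfix₁ : φ σ ν m₁ = m₁)
    -- s₁ = s_*(σ, ν)
    (s₁ : V → ℝ) (hs₁ : ∀ x, s₁ x = -m₁ x + σ x + β ν m₁ x)
    -- m₂ = m_*(s₁, ν')
    (m₂ : V → ℝ) (hm₂ : ∀ x, 0 ≤ m₂ x) (hfix₂ : φ s₁ ν' m₂ = m₂)
    -- s₂ = s_*(s₁, ν')
    (s₂ : V → ℝ) (hs₂ : ∀ x, s₂ x = -m₂ x + s₁ x + β ν' m₂ x)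
    -- m₃ = m_*(σ, ν + ν')
    (m₃ : V → ℝ) (hm₃ : ∀ x, 0 ≤ m₃ x) (hfix₃ : φ σ (ν + ν') m₃ = m₃)
    -- s₃ = s_*(σ, ν + ν')
    (s₃ : V → ℝ) (hs₃ : ∀ x, s₃ x = -m₃ x + σ x + β (ν + ν') m₃ x) :
    s₂ = s₃ ∧ m₁ + m₂ = m₃ := by
  -- basic facts about c x = lam x / (1 + lam x)
  have hden : ∀ x, (0:ℝ) < 1 + lam x := fun x => by have := hlam x; linarith
  have hc1 : ∀ x, lam x / (1 + lam x) ≤ 1 := fun x => by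
    rw [div_le_one (hden x)]; linarith [hlam x]
  have hc0 : ∀ x, 0 ≤ lam x / (1 + lam x) := fun x =>
    div_nonneg (hlam x) (le_of_lt (hden x))
  -- β additivity
  have hβadd : ∀ x, β (ν + ν') (m₁ + m₂) x = β ν m₁ x + β ν' m₂ x := by
    intro x
    simp only [hβ, Pi.add_apply, add_mul, Finset.sum_add_distrib]
    ring
  -- m₁ + m₂ is a fixed point of φ σ (ν+ν')
  have hfixsum : φ σ (ν + ν') (m₁ + m₂) = m₁ + m₂ := by
    funext x
    have h1 := congrFun hfix₁ x
    have h2 := congrFun hfix₂ x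
    rw [hφ] at h1 h2
    rw [hφ, hβadd x, Pi.add_apply]
    rw [hs₁ x] at h2
    have hexp : Real.exp (-(β ν m₁ x + β ν' m₂ x))
        = Real.exp (-(β ν m₁ x)) * Real.exp (-(β ν' m₂ x)) := by
      rw [← Real.exp_add]; ring_nf
    rw [hexp]
    linear_combination Real.exp (-(β ν' m₂ x)) * h1 + h2
  -- nonnegativity of β on nonnegative inputs
  have hβnn : ∀ (m : V → ℝ), (∀ y, 0 ≤ m y) → ∀ x, 0 ≤ β (ν + ν') m x := by
    intro m hm x
    rw [hβ]
    have : (0:ℝ) ≤ ∑ y, m y * P y x :=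
      Finset.sum_nonneg fun y _ => mul_nonneg (hm y) (hP y x)
    have := hν x; have := hν' x
    simp only [Pi.add_apply]; linarith
  have hmsumnn : ∀ y, 0 ≤ (m₁ + m₂) y := fun y => by
    have := hm₁ y; have := hm₂ y; simp [Pi.add_apply]; linarith
  -- pointwise contraction
  have hpoint : ∀ x, |(m₁ + m₂) x - m₃ x| ≤
      ∑ y, |(m₁ + m₂) y - m₃ y| * P y x := by
    intro x
    have e1 := congrFun hfixsum x
    have e2 := congrFun hfix₃ x
    rw [hφ] at e1 e2
    calc |(m₁ + m₂) x - m₃ x|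
        ≤ |β (ν + ν') (m₁ + m₂) x - β (ν + ν') m₃ x| := by
          rw [← e1, ← e2]
          exact lip _ _ _ (by have := (hσ x).2; linarith)
            (by have := (hσ x).1; have := hc1 x; linarith)
            (hβnn _ hmsumnn x) (hβnn _ hm₃ x)
      _ = |∑ y, ((m₁ + m₂) y - m₃ y) * P y x| := by
          simp only [hβ, sub_mul, Finset.sum_sub_distrib]
          ring_nf
      _ ≤ ∑ y, |((m₁ + m₂) y - m₃ y) * P y x| := Finset.abs_sum_le_sum_abs _ _
      _ = ∑ y, |(m₁ + m₂) y - m₃ y| * P y x := by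
          apply Finset.sum_congr rfl
          intro y _
          rw [abs_mul, abs_of_nonneg (hP y x)]
  -- weighted sum contraction
  set S := ∑ x, |(m₁ + m₂) x - m₃ x| * η x with hS
  have hSnn : 0 ≤ S :=
    Finset.sum_nonneg fun x _ => mul_nonneg (abs_nonneg _) (le_of_lt (hη x))
  have hcontr : S ≤ μ * S := by
    calc S ≤ ∑ x, (∑ y, |(m₁ + m₂) y - m₃ y| * P y x) * η x := by
          apply Finset.sum_le_sum
          intro x _
          exact mul_le_mul_of_nonneg_right (hpoint x) (le_of_lt (hη x))
      _ = ∑ x, ∑ y, |(m₁ + m₂) y - m₃ y| * (P y x * η x) := by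
          apply Finset.sum_congr rfl
          intro x _
          rw [Finset.sum_mul]
          apply Finset.sum_congr rfl
          intro y _
          ring
      _ = ∑ y, ∑ x, |(m₁ + m₂) y - m₃ y| * (P y x * η x) := Finset.sum_comm
      _ = ∑ y, |(m₁ + m₂) y - m₃ y| * ∑ x, P y x * η x := by
          apply Finset.sum_congr rfl
          intro y _
          rw [Finset.mul_sum]
      _ = μ * S := by
          rw [hS, Finset.mul_sum]
          apply Finset.sum_congr rfl
          intro y _
          rw [heig y]
          ring
  have hS0 : S = 0 := by nlinarith [hμ.1, hμ.2]
  have hmeq : m₁ + m₂ = m₃ := by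
    funext x
    have hall := (Finset.sum_eq_zero_iff_of_nonneg
      (fun x _ => mul_nonneg (abs_nonneg ((m₁ + m₂) x - m₃ x)) (le_of_lt (hη x)))).mp hS0
    have hx := hall x (Finset.mem_univ x)
    have h0 : |(m₁ + m₂) x - m₃ x| = 0 := by
      rcases mul_eq_zero.mp hx with h | h
      · exact h
      · exact absurd h (ne_of_gt (hη x))
    have h1 := abs_eq_zero.mp h0
    linarith
  refine ⟨?_, hmeq⟩
  funext x
  rw [hs₂ x, hs₃ x, hs₁ x, ← hmeq]
  simp only [hβ, Pi.add_apply, add_mul, Finset.sum_add_distrib]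
  ring
end
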